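/- Fix A > 0 and a wavenumber α > 0, and for B > 0 set κ_α(B) := √(α² + B), λ*_α(B) := (α²A/2)·(κ_α(B)²/B)·[1 − tanh(κ_α(B))/κ_α(B)]^{−1}, and h_α*(B;x) := (λ*_α(B)·B/(α²κ_α(B)²))·[1 − cosh(κ_α(B)·x)/cosh(κ_α(B))]. Then for every x ∈ (−1,1), h_α*(B;x) → A/2 as B → ∞. -/

import Mathlib

/-- `κ_α(B) = √(α² + B)`. -/
noncomputable def kappaAlpha (α B : ℝ) : ℝ := Real.sqrt (α ^ 2 + B)

/-- The squared maximal sloshing frequency `λ*_α(B)` for wavenumber `α > 0`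
with surface tension. -/
noncomputable def lamStarAlpha (A α B : ℝ) : ℝ :=
  (α ^ 2 * A / 2) * (kappaAlpha α B ^ 2 / B) *
    (1 - Real.tanh (kappaAlpha α B) / kappaAlpha α B)⁻¹

/-- The optimal shallow canal cross-section `h_α*(B; x)` for wavenumber `α > 0`
with surface tension. -/
noncomputable def hStarAlpha (A α B x : ℝ) : ℝ :=
  lamStarAlpha A α B * B / (α ^ 2 * kappaAlpha α B ^ 2) *
    (1 - Real.cosh (kappaAlpha α B * x) / Real.cosh (kappaAlpha α B))

/-!
After cancelling, `h_α*(B; x) = (A/2) · (1 - tanh κ / κ)⁻¹ · (1 - cosh (κ x) / cosh κ)` with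
`κ = √(α² + B) → ∞`. Since `tanh` is bounded, `tanh κ / κ → 0`, and for `|x| < 1` the ratio
`cosh (κ x) / cosh κ ≤ 2 exp (κ (|x| - 1))` decays, so both brackets tend to `1`.
-/

open Filter Topology Real

lemma Real.cosh_le_exp_abs (y : ℝ) : cosh y ≤ exp |y| := by
  rw [← cosh_abs, cosh_eq]
  have := exp_le_exp.2 (neg_le_self (abs_nonneg y))
  linarith

lemma Real.exp_le_two_mul_cosh (y : ℝ) : exp y ≤ 2 * cosh y := by
  rw [cosh_eq]
  linarith [exp_pos (-y)]

lemma Real.tendsto_tanh_div_self_atTop : Tendsto (fun k => tanh k / k) atTop (𝓝 0) := by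
  simp_rw [div_eq_mul_inv, mul_comm (tanh _)]
  exact tendsto_inv_atTop_zero.zero_mul_isBoundedUnder_le
    (isBoundedUnder_of ⟨1, fun k => (abs_tanh_lt_one k).le⟩)

lemma Real.cosh_mul_div_cosh_le {k x : ℝ} (hk : 0 ≤ k) :
    cosh (k * x) / cosh k ≤ 2 * exp (k * (|x| - 1)) := by
  rw [div_le_iff₀ (cosh_pos k)]
  calc cosh (k * x) ≤ exp (k * |x|) := by
        simpa [abs_mul, abs_of_nonneg hk] using cosh_le_exp_abs (k * x)
    _ = exp (k * (|x| - 1)) * exp k := by rw [← exp_add]; ring_nf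
    _ ≤ exp (k * (|x| - 1)) * (2 * cosh k) := by gcongr; exact exp_le_two_mul_cosh k
    _ = 2 * exp (k * (|x| - 1)) * cosh k := by ring

lemma Real.tendsto_cosh_mul_div_cosh_atTop {x : ℝ} (hx : |x| < 1) :
    Tendsto (fun k => cosh (k * x) / cosh k) atTop (𝓝 0) := by
  have hdecay : Tendsto (fun k => 2 * exp (k * (|x| - 1))) atTop (𝓝 0) := by
    simpa using ((tendsto_exp_atBot.comp
      (tendsto_id.atTop_mul_const_of_neg (sub_neg.2 hx))).const_mul 2)
  refine squeeze_zero' (.of_forall fun k => by positivity) ?_ hdecay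
  filter_upwards [eventually_ge_atTop 0] with k hk using cosh_mul_div_cosh_le hk

lemma tendsto_kappaAlpha_atTop (α : ℝ) : Tendsto (kappaAlpha α) atTop atTop :=
  tendsto_sqrt_atTop.comp (tendsto_atTop_add_const_left _ _ tendsto_id)

lemma hStarAlpha_eq {A α B : ℝ} (x : ℝ) (hα : α ≠ 0) (hB : 0 < B) :
    hStarAlpha A α B x = A / 2 * (1 - tanh (kappaAlpha α B) / kappaAlpha α B)⁻¹ *
      (1 - cosh (kappaAlpha α B * x) / cosh (kappaAlpha α B)) := by
  have hκ : kappaAlpha α B ≠ 0 := (sqrt_pos.2 (by positivity)).ne'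
  unfold hStarAlpha lamStarAlpha
  congr 1
  generalize (1 - tanh (kappaAlpha α B) / kappaAlpha α B)⁻¹ = T
  field_simp

theorem hStarAlpha_zero_surface_tension_limit_general (A α : ℝ) (hα : 0 < α)
    (x : ℝ) (hx : x ∈ Set.Ioo (-1 : ℝ) 1) :
    Filter.Tendsto (fun B => hStarAlpha A α B x) Filter.atTop (nhds (A / 2)) := by
  have hκ := tendsto_kappaAlpha_atTop α
  have htanh : Tendsto (fun B => 1 - tanh (kappaAlpha α B) / kappaAlpha α B) atTop (𝓝 1) := by
    simpa using (tendsto_tanh_div_self_atTop.comp hκ).const_sub 1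
  have hcosh : Tendsto (fun B => 1 - cosh (kappaAlpha α B * x) / cosh (kappaAlpha α B))
      atTop (𝓝 1) := by
    simpa using ((tendsto_cosh_mul_div_cosh_atTop (abs_lt.2 hx)).comp hκ).const_sub 1
  have hlim := ((htanh.inv₀ one_ne_zero).const_mul (A / 2)).mul hcosh
  rw [inv_one, mul_one, mul_one] at hlim
  refine hlim.congr' ?_
  filter_upwards [eventually_gt_atTop 0] with B hB
  exact (hStarAlpha_eq x hα.ne' hB).symm

theorem hStarAlpha_zero_surface_tension_limit (A α : ℝ) (hA : 0 < A) (hα : 0 < α)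
    (x : ℝ) (hx : x ∈ Set.Ioo (-1 : ℝ) 1) :
    Filter.Tendsto (fun B => hStarAlpha A α B x) Filter.atTop (nhds (A / 2)) :=
  hStarAlpha_zero_surface_tension_limit_general A α hα x hx
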